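/- arXiv:2503.02203 — 4 statements merged into one kernel-verified Lean document; each statement's English description precedes it below -/
import Mathlib

section
/- Let P be a positive integer, X : ZMod P → ℂ, and define the time-domain signal x : ZMod P → ℂ by x[n] = (1/P) · Σ_{q ∈ ZMod P} X[q] · exp(2πi·q·n/P). Then for every integer k ≥ 0 and every p ∈ ZMod P, the p-th DFT coefficient of the (2k+1)-th parallel-Hammerstein basis satisfies Σ_{n ∈ ZMod P} x[n]^{k+1} · conj(x[n])^{k} · exp(−2πi·p·n/P) = P^{−2k} · Σ_{(q_1,…,q_{2k+1}) ∈ Q_{2k+1}(ZMod P, p)} ∏_{i=1}^{k+1} X[q_i] · ∏_{j=k+2}^{2k+1} conj(X[q_j]). -/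
open Finset Complex

/-- The IMD index set `Q_{2k+1}(D, p)`: tuples `(q_1, …, q_{2k+1}) ∈ D^{2k+1}` such that
`q_1 + ⋯ + q_{k+1} − (q_{k+2} + ⋯ + q_{2k+1}) = p` in `ZMod P`. -/
def imdSet (P : ℕ) [NeZero P] (D : Finset (ZMod P)) (k : ℕ) (p : ZMod P) :
    Finset (Fin (2 * k + 1) → ZMod P) :=
  Finset.univ.filter fun q =>
    (∀ i, q i ∈ D) ∧
      ((∑ i : Fin (2 * k + 1), if (i : ℕ) < k + 1 then q i else 0) -
        ∑ i : Fin (2 * k + 1), if (i : ℕ) < k + 1 then 0 else q i) = p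

/-- `exp(2πi·t/P)` for `t : ZMod P`; well defined since only `t mod P` enters. -/
noncomputable def eChar (P : ℕ) [NeZero P] (t : ZMod P) : ℂ :=
  Complex.exp (2 * Real.pi * Complex.I * (t.val : ℂ) / P)

/-!
Write `x[n]` and `conj x[n]` as inverse DFTs of `X` and of `conj X` at negated frequencies. The
product of the `2k+1` factors then expands into a sum over frequency tuples `q`, the tuple `q`
carrying the character at the signed sum `q_1 + ⋯ + q_{k+1} − (q_{k+2} + ⋯ + q_{2k+1})`.
Taking the DFT at `p`, orthogonality of characters keeps exactly the tuples whose signed sum is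
`p`, each with a factor `P` that cancels one of the `2k+1` normalisations `1/P`.
-/

lemma eChar_eq_stdAddChar (P : ℕ) [NeZero P] (t : ZMod P) : eChar P t = ZMod.stdAddChar t := by
  rw [ZMod.stdAddChar_apply, ZMod.toCircle_apply, eChar]

lemma AddChar.map_sum_eq_prod {A M ι : Type*} [AddCommMonoid A] [CommMonoid M]
    (ψ : AddChar A M) (s : Finset ι) (f : ι → A) : ψ (∑ i ∈ s, f i) = ∏ i ∈ s, ψ (f i) := by
  classical
  induction s using Finset.induction_on with
  | empty => simp
  | insert a s ha ih => rw [sum_insert ha, prod_insert ha, AddChar.map_add_eq_mul, ih]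

lemma Fin.prod_ite_val_lt {M : Type*} [CommMonoid M] (n m : ℕ) (a b : M) :
    ∏ i : Fin n, (if (i : ℕ) < m then a else b) = a ^ min n m * b ^ (n - m) := by
  rw [prod_ite, Finset.prod_const, Finset.prod_const, Fin.card_filter_val_lt, filter_not,
    card_sdiff_of_subset (filter_subset _ _), Fin.card_filter_val_lt, card_univ, Fintype.card_fin]
  congr 2
  omega

section SignedSum

variable {ι : Type*} [Fintype ι] (s : ι → Prop) [DecidablePred s]

/-- The factors `i` with `s i` enter unconjugated, the others conjugated. -/
def signedSum {G : Type*} [AddCommGroup G] (q : ι → G) : G := ∑ i, if s i then q i else -q i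

lemma signedSum_eq_sub {G : Type*} [AddCommGroup G] (q : ι → G) :
    signedSum s q = (∑ i, if s i then q i else 0) - ∑ i, if s i then 0 else q i := by
  rw [signedSum, ← sum_sub_distrib]
  refine sum_congr rfl fun i _ => ?_
  split_ifs <;> simp

variable {R : Type*} [CommRing R] [Fintype R] {ψ : AddChar R ℂ} {X x : R → ℂ}

lemma AddChar.sum_mul_conj_eq_ite [DecidableEq R] (hψ : ψ.IsPrimitive) (a b : R) :
    ∑ n, ψ (a * n) * starRingEnd ℂ (ψ (b * n)) = if a = b then (Fintype.card R : ℂ) else 0 := by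
  have h : ∀ n, ψ (a * n) * starRingEnd ℂ (ψ (b * n)) = ψ (n * (a - b)) := fun n => by
    rw [← AddChar.map_neg_eq_conj, ← AddChar.map_add_eq_mul]; ring_nf
  simp_rw [h, AddChar.sum_mulShift _ hψ, sub_eq_zero, Nat.cast_ite, Nat.cast_zero]

lemma ite_conj_eq_sum (hx : ∀ n, x n = (Fintype.card R : ℂ)⁻¹ * ∑ c, X c * ψ (c * n))
    (t : Prop) [Decidable t] (n : R) :
    (if t then x n else starRingEnd ℂ (x n)) = (Fintype.card R : ℂ)⁻¹ *
      ∑ c, (if t then X c else starRingEnd ℂ (X c)) * ψ ((if t then c else -c) * n) := by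
  split_ifs
  · exact hx n
  · simp [hx, neg_mul, AddChar.map_neg_eq_conj]

lemma prod_ite_conj_eq_sum [DecidableEq ι]
    (hx : ∀ n, x n = (Fintype.card R : ℂ)⁻¹ * ∑ c, X c * ψ (c * n)) (n : R) :
    ∏ i, (if s i then x n else starRingEnd ℂ (x n)) =
      ((Fintype.card R : ℂ) ^ Fintype.card ι)⁻¹ * ∑ q : ι → R,
        (∏ i, if s i then X (q i) else starRingEnd ℂ (X (q i))) * ψ (signedSum s q * n) := by
  simp_rw [ite_conj_eq_sum hx, prod_mul_distrib, Finset.prod_const, card_univ, prod_univ_sum,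
    Fintype.piFinset_univ, inv_pow]
  congr 1
  refine sum_congr rfl fun q _ => ?_
  rw [prod_mul_distrib, signedSum, sum_mul, AddChar.map_sum_eq_prod]

theorem sum_prod_ite_conj_mul_conj_eq [DecidableEq ι] [DecidableEq R] (hψ : ψ.IsPrimitive)
    (hx : ∀ n, x n = (Fintype.card R : ℂ)⁻¹ * ∑ c, X c * ψ (c * n)) (p : R) :
    ∑ n, (∏ i, if s i then x n else starRingEnd ℂ (x n)) * starRingEnd ℂ (ψ (p * n)) =
      ((Fintype.card R : ℂ) ^ Fintype.card ι)⁻¹ * Fintype.card R *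
        ∑ q with signedSum s q = p, ∏ i, if s i then X (q i) else starRingEnd ℂ (X (q i)) := by
  set c := ((Fintype.card R : ℂ) ^ Fintype.card ι)⁻¹
  set T : (ι → R) → ℂ := fun q => ∏ i, if s i then X (q i) else starRingEnd ℂ (X (q i))
  calc ∑ n, (∏ i, if s i then x n else starRingEnd ℂ (x n)) * starRingEnd ℂ (ψ (p * n))
      = c * ∑ q, T q * ∑ n, ψ (signedSum s q * n) * starRingEnd ℂ (ψ (p * n)) := by
        simp_rw [prod_ite_conj_eq_sum s hx, mul_sum, sum_mul]
        rw [sum_comm]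
        simp only [mul_assoc, c, T]
    _ = c * ∑ q, T q * if signedSum s q = p then (Fintype.card R : ℂ) else 0 := by
        simp_rw [AddChar.sum_mul_conj_eq_ite hψ]
    _ = c * Fintype.card R * ∑ q with signedSum s q = p, T q := by
        rw [Finset.sum_filter, mul_sum, mul_sum]
        refine sum_congr rfl fun q _ => ?_
        split_ifs <;> ring

end SignedSum

lemma imdSet_univ_eq (P : ℕ) [NeZero P] (k : ℕ) (p : ZMod P) :
    imdSet P univ k p =
      univ.filter fun q => signedSum (fun i : Fin (2 * k + 1) => (i : ℕ) < k + 1) q = p := by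
  ext q
  simp [imdSet, signedSum_eq_sub]

/-- DFT of the `(2k+1)`-th parallel-Hammerstein basis: if
`x[n] = (1/P) Σ_q X[q] exp(2πi·q·n/P)`, then for all `k ≥ 0` and `p`,
`Σ_n x[n]^{k+1} conj(x[n])^k exp(−2πi·p·n/P)
  = P^{−2k} Σ_{(q_1,…,q_{2k+1}) ∈ Q_{2k+1}(ZMod P, p)} ∏_{i≤k+1} X[q_i] ∏_{j>k+1} conj(X[q_j])`. -/
theorem dft_parallelHammerstein_basis (P : ℕ) [NeZero P] (X : ZMod P → ℂ)
    (x : ZMod P → ℂ)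
    (hx : ∀ n : ZMod P, x n = (1 / (P : ℂ)) * ∑ q : ZMod P, X q * eChar P (q * n))
    (k : ℕ) (p : ZMod P) :
    ∑ n : ZMod P, (x n) ^ (k + 1) * ((starRingEnd ℂ) (x n)) ^ k *
        (starRingEnd ℂ) (eChar P (p * n)) =
      ((P : ℂ) ^ (2 * k))⁻¹ *
        ∑ q ∈ imdSet P Finset.univ k p, ∏ i : Fin (2 * k + 1),
          if (i : ℕ) < k + 1 then X (q i) else (starRingEnd ℂ) (X (q i)) := by
  have hx' : ∀ n, x n = (Fintype.card (ZMod P) : ℂ)⁻¹ * ∑ c, X c * ZMod.stdAddChar (c * n) := by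
    simpa [ZMod.card, eChar_eq_stdAddChar] using hx
  have hpow : ∀ n, x n ^ (k + 1) * starRingEnd ℂ (x n) ^ k =
      ∏ i : Fin (2 * k + 1), if (i : ℕ) < k + 1 then x n else starRingEnd ℂ (x n) := fun n => by
    rw [Fin.prod_ite_val_lt]
    congr 2 <;> omega
  simp_rw [hpow, eChar_eq_stdAddChar]
  rw [sum_prod_ite_conj_mul_conj_eq _ (ZMod.isPrimitive_stdAddChar P) hx', imdSet_univ_eq]
  simp only [ZMod.card, Fintype.card_fin]
  have hP : (P : ℂ) ≠ 0 := NeZero.ne _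
  field_simp
  ring
end

section
/- (Lemma 1, first recursion.) Let P be a positive integer, D ⊆ ZMod P, X : ZMod P → ℂ, and for k ≥ 0 define S_{2k+1}[p] = Σ_{(q_1,…,q_{2k+1}) ∈ Q_{2k+1}(D,p)} ∏_{i=1}^{k+1} X[q_i] · ∏_{j=k+2}^{2k+1} conj(X[q_j]). Then for every integer k ≥ 1 and every p ∈ ZMod P, S_{2k+1}[p] = Σ_{q_1 ∈ D} Σ_{q_2 ∈ D} X[q_1] · X[q_2] · conj( S_{2k−1}[q_1 + q_2 − p] ). -/
open Finset Complex

/-- The `(2k+1)`-th IMD nonlinear basis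
`S_{2k+1}[p] = Σ_{(q_1,…,q_{2k+1}) ∈ Q_{2k+1}(D,p)} ∏_{i=1}^{k+1} X[q_i] ∏_{j=k+2}^{2k+1} conj(X[q_j])`. -/
noncomputable def imdBasis (P : ℕ) [NeZero P] (D : Finset (ZMod P)) (X : ZMod P → ℂ)
    (k : ℕ) (p : ZMod P) : ℂ :=
  ∑ q ∈ imdSet P D k p, ∏ i : Fin (2 * k + 1),
    if (i : ℕ) < k + 1 then X (q i) else (starRingEnd ℂ) (X (q i))

/-!
Split off the first two unconjugated indices `q₁, q₂` of a tuple in `Q_{2k+1}(D, p)`. The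
remaining `k` unconjugated and `k + 1` conjugated indices, with their roles swapped, form a tuple
of `Q_{2k-1}(D, q₁ + q₂ - p)`, and their contribution is the conjugate of the corresponding term
of `S_{2k-1}`. To make this bookkeeping painless, a tuple is first separated into its unconjugated
and conjugated parts, and the restriction to `D` is moved into the weight `X · 1_D`.
-/

namespace Fin

variable {α : Type*} {a b n : ℕ}

@[to_additive]
lemma prod_ite_lt_append {M : Type*} [CommMonoid M] (h : a + b = n) (x : Fin a → α)
    (y : Fin b → α) (f g : α → M) :
    (∏ i : Fin n, if (i : ℕ) < a then f (append x y (i.cast h.symm))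
      else g (append x y (i.cast h.symm))) = (∏ i, f (x i)) * ∏ j, g (y j) := by
  subst h
  simp [prod_univ_add, append_left, append_right]

lemma sum_pi_eq_sum_sum_append {M : Type*} [Fintype α] [AddCommMonoid M]
    (h : a + b = n) (F : (Fin n → α) → M) :
    ∑ q, F q = ∑ x : Fin a → α, ∑ y : Fin b → α, F fun i => append x y (i.cast h.symm) := by
  subst h
  rw [← Fintype.sum_prod_type']
  exact (Fintype.sum_equiv (appendEquiv a b) _ _ fun _ => by simp [appendEquiv]).symm

lemma sum_pi_succ {M : Type*} [Fintype α] [AddCommMonoid M] (F : (Fin (n + 1) → α) → M) :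
    ∑ q, F q = ∑ x, ∑ q : Fin n → α, F (cons x q) := by
  rw [← Fintype.sum_prod_type']
  exact (Fintype.sum_equiv (consEquiv fun _ => α) _ _ fun _ => rfl).symm

end Fin

section SplitSum

variable {α R : Type*} [AddCommGroup α] [Fintype α] [DecidableEq α] [CommSemiring R] [StarRing R]

/-- `S_{2k+1}[p]` over all frequencies with weight `Y`, the `k + 1` unconjugated indices forming
the tuple `a` and the `k` conjugated ones the tuple `b`. -/
noncomputable def imdSplitSum (Y : α → R) (k : ℕ) (p : α) : R :=
  ∑ a : Fin (k + 1) → α, ∑ b : Fin k → α,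
    if ∑ i, a i - ∑ j, b j = p then (∏ i, Y (a i)) * ∏ j, starRingEnd R (Y (b j)) else 0

lemma imdSplitSum_succ (Y : α → R) (m : ℕ) (p : α) :
    imdSplitSum Y (m + 1) p =
      ∑ q₁, ∑ q₂, Y q₁ * Y q₂ * starRingEnd R (imdSplitSum Y m (q₁ + q₂ - p)) := by
  rw [imdSplitSum, Fin.sum_pi_succ]
  refine sum_congr rfl fun q₁ _ => ?_
  rw [Fin.sum_pi_succ]
  refine sum_congr rfl fun q₂ _ => ?_
  simp only [imdSplitSum, Fin.sum_cons, Fin.prod_univ_succ, Fin.cons_zero, Fin.cons_succ,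
    map_sum, mul_sum]
  rw [sum_comm]
  refine sum_congr rfl fun b _ => sum_congr rfl fun a _ => ?_
  have hcond : q₁ + (q₂ + ∑ i, a i) - ∑ j, b j = p ↔ ∑ j, b j - ∑ i, a i = q₁ + q₂ - p := by
    rw [sub_eq_iff_eq_add, sub_eq_sub_iff_add_eq_add, add_assoc q₁, add_comm p, eq_comm]
  simp only [hcond, apply_ite (starRingEnd R), map_zero, map_mul, map_prod,
    starRingEnd_self_apply]
  split_ifs <;> ring

end SplitSum

lemma imdBasis_eq_imdSplitSum (P : ℕ) [NeZero P] (D : Finset (ZMod P)) (X : ZMod P → ℂ)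
    (k : ℕ) (p : ZMod P) :
    imdBasis P D X k p = imdSplitSum (fun q => if q ∈ D then X q else 0) k p := by
  set Y : ZMod P → ℂ := fun q => if q ∈ D then X q else 0
  have hY : ∀ q : Fin (2 * k + 1) → ZMod P,
      (∏ i : Fin (2 * k + 1), if (i : ℕ) < k + 1 then Y (q i) else starRingEnd ℂ (Y (q i))) =
        if ∀ i, q i ∈ D then
          ∏ i : Fin (2 * k + 1), if (i : ℕ) < k + 1 then X (q i) else starRingEnd ℂ (X (q i))
        else 0 := by
    intro q
    split_ifs with hD
    · exact Fintype.prod_congr _ _ fun i => by simp [Y, hD i]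
    · obtain ⟨i, hi⟩ := not_forall.mp hD
      exact prod_eq_zero (mem_univ i) (by simp [Y, hi])
  have hsplit : k + 1 + k = 2 * k + 1 := by ring
  calc imdBasis P D X k p
      = ∑ q : Fin (2 * k + 1) → ZMod P,
          if (∑ i : Fin (2 * k + 1), if (i : ℕ) < k + 1 then q i else 0) -
              ∑ i : Fin (2 * k + 1), (if (i : ℕ) < k + 1 then 0 else q i) = p then
            ∏ i : Fin (2 * k + 1), if (i : ℕ) < k + 1 then Y (q i) else starRingEnd ℂ (Y (q i))
          else 0 := by
        rw [imdBasis, imdSet, sum_filter]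
        exact Fintype.sum_congr _ _ fun q => by rw [hY, ← ite_and]; exact if_congr and_comm rfl rfl
    _ = imdSplitSum Y k p := by
        rw [Fin.sum_pi_eq_sum_sum_append hsplit]
        refine Fintype.sum_congr _ _ fun a => Fintype.sum_congr _ _ fun b => ?_
        beta_reduce
        rw [Fin.sum_ite_lt_append hsplit a b (fun z => z) fun _ => 0,
          Fin.sum_ite_lt_append hsplit a b (fun _ => 0) fun z => z,
          Fin.prod_ite_lt_append hsplit a b Y fun z => starRingEnd ℂ (Y z)]
        simp only [sum_const_zero, add_zero, zero_add]

/-- Lemma 1, first recursion: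
`S_{2k+1}[p] = Σ_{q₁,q₂ ∈ D} X[q₁] X[q₂] conj(S_{2k−1}[q₁ + q₂ − p])` for `k ≥ 1`. -/
theorem imdBasis_recursion_first (P : ℕ) [NeZero P] (D : Finset (ZMod P))
    (X : ZMod P → ℂ) (k : ℕ) (hk : 1 ≤ k) (p : ZMod P) :
    imdBasis P D X k p =
      ∑ q₁ ∈ D, ∑ q₂ ∈ D,
        X q₁ * X q₂ * (starRingEnd ℂ) (imdBasis P D X (k - 1) (q₁ + q₂ - p)) := by
  obtain ⟨m, rfl⟩ : ∃ m, k = m + 1 := ⟨k - 1, by omega⟩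
  rw [imdBasis_eq_imdSplitSum, imdSplitSum_succ]
  simp only [imdBasis_eq_imdSplitSum, Nat.add_sub_cancel, ite_mul, mul_ite, zero_mul, mul_zero,
    sum_ite_irrel, sum_const_zero, Fintype.sum_ite_mem]
end

section
/- (Theorem 1, cyclic version.) Let P be a positive integer and D ⊆ ZMod P. For s ∈ ZMod P let Λ_D(s) be the number of pairs (q_1, q_2) ∈ D² with q_1 + q_2 = s. Then for every integer k ≥ 1 and every p ∈ ZMod P, the cardinality of the IMD index set satisfies |Q_{2k+1}(D, p)| = Σ_{ρ ∈ ZMod P} Λ_D(p + ρ) · |Q_{2k−1}(D, ρ)|. -/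
/-!
Split a tuple of `Q_{2k+1}(D, p)` into its `k + 1` positive and `k` negative entries. Removing the
first two positive entries `a, b` leaves `k - 1` positive and `k` negative entries; after swapping
the roles of the two groups this is a tuple of `Q_{2k-1}(D, ρ)`, where `ρ` is the negated signed sum
of the rest, and the removed pair is constrained exactly by `a + b = p + ρ`. Summing over `ρ` gives
the recursion.
-/

open Finset

/-- `Λ_D(s)`: the number of pairs `(q₁, q₂) ∈ D²` with `q₁ + q₂ = s`. -/
def lambdaD (P : ℕ) [NeZero P] (D : Finset (ZMod P)) (s : ZMod P) : ℕ :=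
  ((D ×ˢ D).filter fun qq => qq.1 + qq.2 = s).card

section SignedTuples

variable {G : Type*} [AddCommGroup G] [DecidableEq G] (D : Finset G)

def signedTupleSet (ι κ : Type*) [Fintype ι] [DecidableEq ι] [Fintype κ] [DecidableEq κ] (p : G) :
    Finset ((ι → G) × (κ → G)) :=
  (Fintype.piFinset (fun _ => D) ×ˢ Fintype.piFinset (fun _ => D)).filter
    fun x => ∑ i, x.1 i - ∑ j, x.2 j = p

variable {D}

theorem mem_signedTupleSet {ι κ : Type*} [Fintype ι] [DecidableEq ι] [Fintype κ] [DecidableEq κ]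
    {p : G} {x : (ι → G) × (κ → G)} :
    x ∈ signedTupleSet D ι κ p ↔
      (∀ i, x.1 i ∈ D) ∧ (∀ j, x.2 j ∈ D) ∧ ∑ i, x.1 i - ∑ j, x.2 j = p := by
  simp [signedTupleSet, and_assoc]

theorem card_signedTupleSet_fin_add_two [Fintype G] (n : ℕ) (κ : Type*) [Fintype κ]
    [DecidableEq κ] (p : G) :
    #(signedTupleSet D (Fin (n + 2)) κ p) =
      ∑ ρ : G, #((D ×ˢ D).filter fun x => x.1 + x.2 = p + ρ) * #(signedTupleSet D κ (Fin n) ρ) := by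
  simp_rw [← card_product, ← card_sigma]
  refine card_nbij'
    (fun x => ⟨∑ j, x.2 j - ∑ i, Fin.tail (Fin.tail x.1) i,
      ((x.1 0, x.1 1), (x.2, Fin.tail (Fin.tail x.1)))⟩)
    (fun y => (Fin.cons y.2.1.1 (Fin.cons y.2.1.2 y.2.2.2), y.2.2.1)) ?_ ?_ ?_ ?_
  · rintro ⟨u, v⟩ hx
    simp only [coe_sigma, Set.mem_sigma_iff, mem_coe, mem_univ, mem_product, mem_filter,
      mem_signedTupleSet, true_and] at hx ⊢
    obtain ⟨hu, hv, hsum⟩ := hx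
    refine ⟨⟨⟨hu 0, hu 1⟩, ?_⟩, hv, fun j => hu _, trivial⟩
    rw [← hsum, ← Fin.cons_self_tail u, ← Fin.cons_self_tail (Fin.tail u)]
    simp only [Fin.sum_cons, Fin.cons_zero, Fin.cons_one, Fin.tail_cons]
    abel
  · rintro ⟨ρ, ⟨a, b⟩, v, w⟩ hy
    simp only [coe_sigma, Set.mem_sigma_iff, mem_coe, mem_univ, mem_product, mem_filter,
      mem_signedTupleSet, true_and] at hy ⊢
    obtain ⟨⟨⟨ha, hb⟩, hab⟩, hv, hw, hρ⟩ := hy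
    refine ⟨Fin.cases ha (Fin.cases hb hw), hv, ?_⟩
    rw [Fin.sum_cons, Fin.sum_cons, ← add_assoc, hab, ← hρ]
    abel
  · rintro ⟨u, v⟩ -
    ext i
    · exact Fin.cases rfl (Fin.cases rfl fun _ => rfl) i
    · rfl
  · rintro ⟨ρ, ⟨a, b⟩, v, w⟩ hy
    simp only [coe_sigma, Set.mem_sigma_iff, mem_coe, mem_univ, mem_product, mem_filter,
      mem_signedTupleSet, true_and] at hy
    simp [hy.2.2.2]

end SignedTuples

def finSplit (k : ℕ) : Fin (2 * k + 1) ≃ Fin (k + 1) ⊕ Fin k :=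
  (finCongr (by omega)).trans finSumFinEquiv.symm

theorem sum_ite_sub_sum_ite_eq_finSplit {G : Type*} [AddCommGroup G] (k : ℕ)
    (q : Fin (2 * k + 1) → G) :
    ((∑ i : Fin (2 * k + 1), if (i : ℕ) < k + 1 then q i else 0) -
        ∑ i : Fin (2 * k + 1), if (i : ℕ) < k + 1 then 0 else q i) =
      ∑ i, q ((finSplit k).symm (.inl i)) - ∑ j, q ((finSplit k).symm (.inr j)) := by
  simp only [← (finSplit k).symm.sum_comp, Fintype.sum_sum_type]
  simp [finSplit, Fin.is_le, add_assoc]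

theorem card_imdSet_eq_card_signedTupleSet (P : ℕ) [NeZero P] (D : Finset (ZMod P)) (k : ℕ)
    (p : ZMod P) :
    #(imdSet P D k p) = #(signedTupleSet D (Fin (k + 1)) (Fin k) p) := by
  refine card_equiv
    (((finSplit k).arrowCongr (.refl _)).trans (Equiv.sumArrowEquivProdArrow _ _ _)) fun q => ?_
  simp only [imdSet, mem_filter, mem_univ, true_and, sum_ite_sub_sum_ite_eq_finSplit,
    mem_signedTupleSet]
  rw [(finSplit k).forall_congr_left, Sum.forall]
  exact and_assoc

/-- Theorem 1, cyclic version: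
`|Q_{2k+1}(D, p)| = Σ_{ρ ∈ ZMod P} Λ_D(p + ρ) · |Q_{2k−1}(D, ρ)|` for `k ≥ 1`. -/
theorem imdSet_card_recursion (P : ℕ) [NeZero P] (D : Finset (ZMod P))
    (k : ℕ) (hk : 1 ≤ k) (p : ZMod P) :
    (imdSet P D k p).card =
      ∑ ρ : ZMod P, lambdaD P D (p + ρ) * (imdSet P D (k - 1) ρ).card := by
  obtain ⟨n, rfl⟩ : ∃ n, k = n + 1 := ⟨k - 1, by omega⟩
  rw [card_imdSet_eq_card_signedTupleSet, Nat.add_sub_cancel]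
  simp only [card_imdSet_eq_card_signedTupleSet, lambdaD]
  exact card_signedTupleSet_fin_add_two n (Fin (n + 1)) p
end

section
/- (Zero mean of odd-order nonlinear bases.) Let P be a positive integer, D ⊆ ZMod P a finite index set, and (Ω, μ) a probability space. Let X : ZMod P → Ω → ℂ be such that each X[q] is measurable and almost surely bounded, the family (X[q])_{q ∈ D} is independent, and each X[q] with q ∈ D is circularly symmetric (for every θ ∈ ℝ, exp(iθ)·X[q] has the same law as X[q]). For k ≥ 0 and p ∈ ZMod P define the random variable S_{2k+1}[p] = Σ_{(q_1,…,q_{2k+1}) ∈ Q_{2k+1}(D,p)} ∏_{i=1}^{k+1} X[q_i] · ∏_{j=k+2}^{2k+1} conj(X[q_j]). Then E[ S_{2k+1}[p] ] = 0 for every k ≥ 0 and every p ∈ ZMod P. -/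
open Finset MeasureTheory ProbabilityTheory Complex

/-- The random `(2k+1)`-th IMD nonlinear basis
`S_{2k+1}[p](ω) = Σ_{(q_1,…,q_{2k+1}) ∈ Q_{2k+1}(D,p)} ∏_{i≤k+1} X[q_i](ω) ∏_{j>k+1} conj(X[q_j](ω))`. -/
noncomputable def imdBasisRV {Ω : Type*} (P : ℕ) [NeZero P] (D : Finset (ZMod P))
    (X : ZMod P → Ω → ℂ) (k : ℕ) (p : ZMod P) (ω : Ω) : ℂ :=
  ∑ q ∈ imdSet P D k p, ∏ i : Fin (2 * k + 1),
    if (i : ℕ) < k + 1 then X (q i) ω else (starRingEnd ℂ) (X (q i) ω)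


/-!
Multiplying every `X[q]` by `e^{iπ} = -1` preserves each marginal law, hence, by independence,
the joint law of `(X[q])_{q ∈ D}`. Every summand of `S_{2k+1}[p]` is a product of `2k+1` factors
`X[q]` or `conj X[q]`, so this sign change turns `S_{2k+1}[p]` into `-S_{2k+1}[p]`, and
`E[S_{2k+1}[p]] = -E[S_{2k+1}[p]]`.
-/

namespace ProbabilityTheory

variable {Ω ι : Type*} [MeasurableSpace Ω] {μ : Measure Ω}

theorem iIndepFun.map_fun_comp_eq_map_fun [Fintype ι] {β : ι → Type*}
    {mβ : ∀ i, MeasurableSpace (β i)} {f : ∀ i, Ω → β i} (h : iIndepFun f μ)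
    (hf : ∀ i, AEMeasurable (f i) μ) {g : ∀ i, β i → β i} (hg : ∀ i, Measurable (g i))
    (hlaw : ∀ i, μ.map (g i ∘ f i) = μ.map (f i)) :
    μ.map (fun ω i ↦ g i (f i ω)) = μ.map (fun ω i ↦ f i ω) :=
  calc μ.map (fun ω i ↦ g i (f i ω))
      = Measure.pi fun i ↦ μ.map (g i ∘ f i) :=
        (h.comp g hg).map_fun_eq_pi_map fun i ↦ (hg i).comp_aemeasurable (hf i)
    _ = μ.map (fun ω i ↦ f i ω) := by simp_rw [hlaw, h.map_fun_eq_pi_map hf]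

end ProbabilityTheory

namespace MeasureTheory

variable {Ω E G : Type*} [MeasurableSpace Ω] {μ : Measure Ω}

theorem integral_comp_eq_zero_of_map_neg_eq [MeasurableSpace E] [Neg E] [MeasurableNeg E]
    [NormedAddCommGroup G] [NormedSpace ℝ G] {V : Ω → E} {F : E → G} (hV : AEMeasurable V μ)
    (hlaw : μ.map (fun ω ↦ -V ω) = μ.map V) (hF : StronglyMeasurable F)
    (hodd : ∀ v, F (-v) = -F v) :
    ∫ ω, F (V ω) ∂μ = 0 := by
  have hV_neg : AEMeasurable (fun ω ↦ -V ω) μ := measurable_neg.comp_aemeasurable hV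
  suffices h : (2 : ℝ) • ∫ ω, F (V ω) ∂μ = 0 from (smul_eq_zero.1 h).resolve_left two_ne_zero
  rw [two_smul, ← eq_neg_iff_add_eq_zero, ← integral_neg]
  calc ∫ ω, F (V ω) ∂μ
      = ∫ v, F v ∂μ.map V := (integral_map hV hF.aestronglyMeasurable).symm
    _ = ∫ ω, F (-V ω) ∂μ := by rw [← hlaw, integral_map hV_neg hF.aestronglyMeasurable]
    _ = ∫ ω, -F (V ω) ∂μ := by simp_rw [hodd]

end MeasureTheory

section imdBasisRV

variable {Ω Ω' : Type*} {P : ℕ} [NeZero P] {D : Finset (ZMod P)} {k : ℕ} {p : ZMod P}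

theorem mem_of_mem_imdSet {q : Fin (2 * k + 1) → ZMod P} (hq : q ∈ imdSet P D k p)
    (i : Fin (2 * k + 1)) : q i ∈ D :=
  (mem_filter.1 hq).2.1 i

theorem imdBasisRV_congr {X : ZMod P → Ω → ℂ} {Y : ZMod P → Ω' → ℂ} {ω : Ω} {ω' : Ω'}
    (h : ∀ q ∈ D, X q ω = Y q ω') :
    imdBasisRV P D X k p ω = imdBasisRV P D Y k p ω' :=
  sum_congr rfl fun _ hq ↦ prod_congr rfl fun i _ ↦ by rw [h _ (mem_of_mem_imdSet hq i)]

theorem imdBasisRV_neg (X : ZMod P → Ω → ℂ) (ω : Ω) :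
    imdBasisRV P D (fun q ω ↦ -X q ω) k p ω = -imdBasisRV P D X k p ω := by
  simp only [imdBasisRV, map_neg, ← neg_ite, prod_neg, card_univ, Fintype.card_fin,
    (odd_two_mul_add_one k).neg_one_pow, neg_one_mul, sum_neg_distrib]

theorem measurable_imdBasisRV [MeasurableSpace Ω] {X : ZMod P → Ω → ℂ}
    (hX : ∀ q, Measurable (X q)) : Measurable (imdBasisRV P D X k p) :=
  Finset.measurable_sum _ fun _ _ ↦ Finset.measurable_prod _ fun i _ ↦ by
    split_ifs
    exacts [hX _, Complex.continuous_conj.measurable.comp (hX _)]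

end imdBasisRV

theorem imdBasisRV_integral_eq_zero_general {Ω : Type*} [MeasurableSpace Ω]
    (μ : Measure Ω)
    (P : ℕ) [NeZero P] (D : Finset (ZMod P))
    (X : ZMod P → Ω → ℂ)
    (hmeas : ∀ q : ZMod P, Measurable (X q))
    (hindep : iIndepFun
      (fun q : {x // x ∈ D} => X q.1) μ)
    (hcirc : ∀ q ∈ D, ∀ θ : ℝ,
      Measure.map (fun ω => Complex.exp (θ * Complex.I) * X q ω) μ = Measure.map (X q) μ)
    (k : ℕ) (p : ZMod P) :
    ∫ ω, imdBasisRV P D X k p ω ∂μ = 0 := by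
  -- `S_{2k+1}[p]` only sees the coordinates in `D`, so it factors through `(X[d])_{d ∈ D}`.
  let extendByZero (x : ZMod P) (v : D → ℂ) : ℂ := if h : x ∈ D then v ⟨x, h⟩ else 0
  let F : (D → ℂ) → ℂ := imdBasisRV P D extendByZero k p
  have hS : ∀ ω, imdBasisRV P D X k p ω = F fun d ↦ X d ω :=
    fun ω ↦ imdBasisRV_congr fun q hq ↦ by simp [extendByZero, hq]
  have hodd : ∀ v, F (-v) = -F v := fun v ↦ by
    rw [← imdBasisRV_neg]
    exact imdBasisRV_congr fun q hq ↦ by simp [extendByZero, hq]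
  have hF : Measurable F := measurable_imdBasisRV fun x ↦ by
    by_cases hx : x ∈ D <;> simp only [extendByZero, hx, dite_true, dite_false] <;> fun_prop
  have hlaw : μ.map (fun ω (d : D) ↦ -X d ω) = μ.map (fun ω (d : D) ↦ X d ω) :=
    hindep.map_fun_comp_eq_map_fun (fun d ↦ (hmeas d).aemeasurable) (fun _ ↦ measurable_neg)
      fun d ↦ by simpa [Function.comp_def] using hcirc d d.2 Real.pi
  simp_rw [hS]
  exact integral_comp_eq_zero_of_map_neg_eq
    (measurable_pi_lambda _ fun d : D ↦ hmeas d).aemeasurable hlaw hF.stronglyMeasurable hodd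

/-- Zero mean of odd-order nonlinear bases: if the `X[q]`, `q ∈ D`, are independent,
measurable, a.s. bounded, circularly symmetric complex random variables, then
`E[S_{2k+1}[p]] = 0` for every `k ≥ 0` and every `p`. -/
theorem imdBasisRV_integral_eq_zero {Ω : Type*} [MeasurableSpace Ω]
    (μ : Measure Ω) [IsProbabilityMeasure μ]
    (P : ℕ) [NeZero P] (D : Finset (ZMod P))
    (X : ZMod P → Ω → ℂ)
    (hmeas : ∀ q : ZMod P, Measurable (X q))
    (hbdd : ∀ q : ZMod P, ∃ C : ℝ, ∀ᵐ ω ∂μ, ‖X q ω‖ ≤ C)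
    (hindep : iIndepFun
      (fun q : {x // x ∈ D} => X q.1) μ)
    (hcirc : ∀ q ∈ D, ∀ θ : ℝ,
      Measure.map (fun ω => Complex.exp (θ * Complex.I) * X q ω) μ = Measure.map (X q) μ)
    (k : ℕ) (p : ZMod P) :
    ∫ ω, imdBasisRV P D X k p ω ∂μ = 0 :=
  imdBasisRV_integral_eq_zero_general μ P D X hmeas hindep hcirc k p
end
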